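/- Any natural transformation f : X → Z of fibrant-type-valued diagrams over an admissible inverse category C factors as f = p ∘ i, where i : X → Y is a levelwise homotopy equivalence and p : Y → Z is a Reedy fibration. In particular (taking Z constant on the unit type), every type-valued diagram over C admits a Reedy fibrant replacement: a Reedy fibrant diagram Y with a levelwise equivalence X → Y. -/

import Mathlib

/-- The data of a two-level type theory (over Lean's strict layer, where
strict equality is `Eq` and strict isomorphism is `Equiv`): a fibrancy
predicate on pretypes, fibrant identity types with their elimination rule
into fibrant families, and closure of fibrant types under `Π` and `Σ`. -/
structure TLTT : Type 1 where
  Fib : Type → Prop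
  Id : (A : Type) → A → A → Type
  idRefl : {A : Type} → (a : A) → Id A a a
  fibId : ∀ {A : Type}, Fib A → ∀ a b : A, Fib (Id A a b)
  idElim : {A : Type} → (a : A) → (P : (b : A) → Id A a b → Type) →
    (∀ b p, Fib (P b p)) → P a (idRefl a) → ∀ b p, P b p
  idComp : ∀ {A : Type} (a : A) (P : (b : A) → Id A a b → Type)
      (hP : ∀ b p, Fib (P b p)) (d : P a (idRefl a)),
      idElim a P hP d a (idRefl a) = d
  fibUnit : Fib PUnit
  fibPi : ∀ {A : Type} {B : A → Type}, Fib A → (∀ a, Fib (B a)) → Fib (∀ a, B a)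
  fibSigma : ∀ {A : Type} {B : A → Type}, Fib A → (∀ a, Fib (B a)) → Fib (Σ a, B a)

namespace TwoLevel

/-- A pretype is essentially fibrant if it is strictly isomorphic to a fibrant type. -/
def EssFib (T : TLTT) (A : Type) : Prop := ∃ B : Type, T.Fib B ∧ Nonempty (A ≃ B)

/-- A pretype is finite if it is strictly isomorphic to some `Fin n`. -/
def IsFinite (A : Type) : Prop := ∃ n : ℕ, Nonempty (A ≃ Fin n)

/-- A map is a fibration if all of its strict fibres are essentially fibrant. -/
def IsFibration (T : TLTT) {E B : Type} (p : E → B) : Prop :=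
  ∀ b : B, EssFib T { e : E // p e = b }

/-- Homotopy equivalence of pretypes with respect to the fibrant identity type. -/
def IsHEquiv (T : TLTT) {A B : Type} (f : A → B) : Prop :=
  ∃ g : B → A, (∀ a, Nonempty (T.Id A (g (f a)) a)) ∧ (∀ b, Nonempty (T.Id B (f (g b)) b))

/-- A pretype is cofibrant if exponentiating out of it preserves fibrations. -/
def Cofibrant (T : TLTT) (A : Type) : Prop :=
  ∀ {X Y : Type} (p : X → Y), IsFibration T p → IsFibration T (fun g : A → X => p ∘ g)

/-- A cofibration is a complemented monomorphism with cofibrant complement. -/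
def IsCofibration (T : TLTT) {A B : Type} (f : A → B) : Prop :=
  ∃ Ac : Type, Cofibrant T Ac ∧ ∃ g : Ac → B, Function.Bijective (Sum.elim f g)

end TwoLevel
/-- Strict categories: categorical laws hold up to strict equality. -/
structure SCat : Type 1 where
  Obj : Type
  Hom : Obj → Obj → Type
  id : ∀ x, Hom x x
  comp : ∀ {x y z}, Hom y z → Hom x y → Hom x z
  id_comp : ∀ {x y} (f : Hom x y), comp (id y) f = f
  comp_id : ∀ {x y} (f : Hom x y), comp f (id x) = f
  assoc : ∀ {w x y z} (h : Hom y z) (g : Hom x y) (f : Hom w x),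
    comp (comp h g) f = comp h (comp g f)

/-- Strict (pretype-valued) diagrams on a strict category. -/
structure SFunctor (C : SCat) : Type 1 where
  obj : C.Obj → Type
  map : ∀ {x y}, C.Hom x y → obj x → obj y
  map_id : ∀ {x} (a : obj x), map (C.id x) a = a
  map_comp : ∀ {x y z} (g : C.Hom y z) (f : C.Hom x y) (a : obj x),
    map g (map f a) = map (C.comp g f) a

/-- Strict natural transformations of diagrams. -/
structure SNat {C : SCat} (X Y : SFunctor C) : Type where
  app : ∀ i, X.obj i → Y.obj i
  nat : ∀ {i j} (f : C.Hom i j) (a : X.obj i), Y.map f (app i a) = app j (X.map f a)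

theorem SNat.ext' {C : SCat} {X Y : SFunctor C} {f g : SNat X Y}
    (h : f.app = g.app) : f = g := by
  cases f; cases g; cases h; rfl

/-- Composition of natural transformations. -/
def natComp {C : SCat} {X Y Z : SFunctor C} (g : SNat Y Z) (f : SNat X Y) : SNat X Z :=
  ⟨fun i a => g.app i (f.app i a), by intro i j u a; rw [g.nat, f.nat]⟩

/-- The (strict) limit of a diagram, realised as the pretype of cones with tip `1`. -/
def SLimit (C : SCat) (X : SFunctor C) : Type :=
  { c : ∀ i, X.obj i // ∀ ⦃i j⦄ (f : C.Hom i j), X.map f (c i) = c j }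

/-- The constant diagram. -/
def constF (C : SCat) (A : Type) : SFunctor C :=
  ⟨fun _ => A, fun _ a => a, fun _ => rfl, fun _ _ _ => rfl⟩

/-- `f` is not an identity morphism. -/
def NotId (C : SCat) {x y : C.Obj} (f : C.Hom x y) : Prop :=
  ¬ ∃ _h : x = y, HEq f (C.id x)

/-- Objects of the reduced coslice `z ⫽ C`. -/
def RedCoslice (C : SCat) (z : C.Obj) : Type :=
  Σ y : C.Obj, { f : C.Hom z y // NotId C f }

/-- The reduced coslice category `z ⫽ C`. -/
def RedCosliceCat (C : SCat) (z : C.Obj) : SCat where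
  Obj := RedCoslice C z
  Hom w w' := { h : C.Hom w.1 w'.1 // C.comp h w.2.1 = w'.2.1 }
  id w := ⟨C.id w.1, C.id_comp _⟩
  comp h g := ⟨C.comp h.1 g.1, by rw [C.assoc, g.2, h.2]⟩
  id_comp f := Subtype.ext (C.id_comp _)
  comp_id f := Subtype.ext (C.comp_id _)
  assoc h g f := Subtype.ext (C.assoc _ _ _)

/-- Restriction of a diagram along the forgetful functor `z ⫽ C → C`. -/
def restrictRC {C : SCat} (X : SFunctor C) (z : C.Obj) : SFunctor (RedCosliceCat C z) where
  obj w := X.obj w.1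
  map h a := X.map h.1 a
  map_id a := X.map_id a
  map_comp g f a := X.map_comp g.1 f.1 a

/-- The matching object `M_z^X`: the limit of `X` over the reduced coslice. -/
def Matching {C : SCat} (X : SFunctor C) (z : C.Obj) : Type :=
  SLimit (RedCosliceCat C z) (restrictRC X z)

/-- The canonical map `X_z → M_z^X`. -/
def canMatch {C : SCat} (X : SFunctor C) (z : C.Obj) (x : X.obj z) : Matching X z :=
  ⟨fun w => X.map w.2.1 x, by
    intro w w' h
    exact (X.map_comp h.1 w.2.1 x).trans (by rw [h.2])⟩

/-- A diagram is Reedy fibrant if each canonical map `X_z → M_z^X` is a fibration. -/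
def ReedyFibrant (T : TLTT) {C : SCat} (X : SFunctor C) : Prop :=
  ∀ z, TwoLevel.IsFibration T (canMatch X z)

/-- The map induced on matching objects by a natural transformation. -/
def matchNat {C : SCat} {X Y : SFunctor C} (p : SNat X Y) (z : C.Obj) :
    Matching X z → Matching Y z :=
  fun c => ⟨fun w => p.app w.1 (c.1 w), by
    intro w w' h
    exact (p.nat h.1 (c.1 w)).trans (congrArg (p.app w'.1) (c.2 h))⟩

/-- The relative matching map `X_n → M_n^X ×_{M_n^Y} Y_n` of `p : X → Y`. -/
def relMatchMap {C : SCat} {X Y : SFunctor C} (p : SNat X Y) (n : C.Obj) :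
    X.obj n → { q : Matching X n × Y.obj n // matchNat p n q.1 = canMatch Y n q.2 } :=
  fun x => ⟨(canMatch X n x, p.app n x), by
    apply Subtype.ext
    funext w
    exact (p.nat w.2.1 x).symm⟩

/-- A natural transformation is a Reedy fibration if all of its relative matching
maps are fibrations. -/
def IsReedyFibration (T : TLTT) {C : SCat} {X Y : SFunctor C} (p : SNat X Y) : Prop :=
  ∀ n, TwoLevel.IsFibration T (relMatchMap p n)

/-- An inverse category: a strict category with a rank function such that every
morphism either strictly decreases the rank or is an identity. -/
def IsInverse (C : SCat) : Prop :=
  ∃ φ : C.Obj → ℕ, ∀ ⦃x y⦄ (f : C.Hom x y), φ x > φ y ∨ ∃ h : x = y, HEq f (C.id x)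

/-- The map induced on limits by a natural transformation. -/
def limMap {C : SCat} {X Y : SFunctor C} (p : SNat X Y) : SLimit C X → SLimit C Y :=
  fun c => ⟨fun i => p.app i (c.1 i), by
    intro i j f
    exact (p.nat f (c.1 i)).trans (congrArg (p.app j) (c.2 f))⟩

/-- An inverse category is admissible if Reedy fibrant diagrams over all of its
reduced coslices have essentially fibrant limits. -/
def Admissible (T : TLTT) (C : SCat) : Prop :=
  ∀ (z : C.Obj) (Y : SFunctor (RedCosliceCat C z)), ReedyFibrant T Y →
    TwoLevel.EssFib T (SLimit (RedCosliceCat C z) Y)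

/-- The pullback of diagrams `A ×_B X` along `f : A → B` and `p : X → B`,
computed pointwise. -/
def pbFunctor {C : SCat} {A B X : SFunctor C} (f : SNat A B) (p : SNat X B) :
    SFunctor C where
  obj i := { z : A.obj i × X.obj i // f.app i z.1 = p.app i z.2 }
  map g z := ⟨(A.map g z.1.1, X.map g z.1.2), by rw [← f.nat, ← p.nat, z.2]⟩
  map_id z := by
    apply Subtype.ext
    exact Prod.ext (A.map_id _) (X.map_id _)
  map_comp g h z := by
    apply Subtype.ext
    exact Prod.ext (A.map_comp _ _ _) (X.map_comp _ _ _)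

/-- Projection from the pullback of diagrams to the base. -/
def pbProj {C : SCat} {A B X : SFunctor C} (f : SNat A B) (p : SNat X B) :
    SNat (pbFunctor f p) A :=
  ⟨fun _ z => z.1.1, fun _ _ => rfl⟩

/-- A pushout square of diagrams, via its universal property. -/
def IsPushout {C : SCat} {P A B Q : SFunctor C} (f : SNat P A) (g : SNat P B)
    (ia : SNat A Q) (ib : SNat B Q) : Prop :=
  natComp ia f = natComp ib g ∧
  ∀ (W : SFunctor C) (u : SNat A W) (v : SNat B W),
    natComp u f = natComp v g → ∃! w : SNat Q W, natComp w ia = u ∧ natComp w ib = v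
/-- Hom-pretypes of the category `C* = 1 ⋆ C` obtained by freely adjoining an
initial object `none`. -/
def OHom (C : SCat) : Option C.Obj → Option C.Obj → Type
  | none, _ => PUnit
  | some _, none => Empty
  | some a, some b => C.Hom a b

def oid (C : SCat) : ∀ x : Option C.Obj, OHom C x x
  | none => PUnit.unit
  | some a => C.id a

def ocomp (C : SCat) : ∀ {x y z : Option C.Obj}, OHom C y z → OHom C x y → OHom C x z
  | none, _, _, _, _ => PUnit.unit
  | some _, none, _, _, f => f.elim
  | some _, some _, none, g, _ => g.elim
  | some _, some _, some _, g, f => C.comp g f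

/-- The category `C* = 1 ⋆ C`. -/
def CStar (C : SCat) : SCat where
  Obj := Option C.Obj
  Hom := OHom C
  id := oid C
  comp := ocomp C
  id_comp {x y} f := by
    cases x <;> cases y
    · rfl
    · rfl
    · exact f.elim
    · exact C.id_comp f
  comp_id {x y} f := by
    cases x <;> cases y
    · rfl
    · rfl
    · exact f.elim
    · exact C.comp_id f
  assoc {w x y z} h g f := by
    cases w <;> cases x <;> cases y <;> cases z <;>
      first
        | rfl
        | exact f.elim
        | exact g.elim
        | exact h.elim
        | exact C.assoc h g f

/-- Restriction of a diagram on `C*` to `C`. -/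
def restrictC {C : SCat} (X : SFunctor (CStar C)) : SFunctor C where
  obj i := X.obj (some i)
  map {i j} f a := X.map (x := some i) (y := some j) f a
  map_id a := X.map_id a
  map_comp g f a := X.map_comp (x := some _) (y := some _) (z := some _) g f a

/-- Restriction of a natural transformation of diagrams on `C*` to `C`. -/
def restrictNat {C : SCat} {F G : SFunctor (CStar C)} (η : SNat F G) :
    SNat (restrictC F) (restrictC G) :=
  ⟨fun i a => η.app (some i) a, fun f a => η.nat (i := some _) (j := some _) f a⟩

/-- The canonical map `X(*) → lim_C X`. -/
def canLim {C : SCat} (X : SFunctor (CStar C)) : X.obj none → SLimit C (restrictC X) :=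
  fun x => ⟨fun i => X.map (x := none) (y := some i) PUnit.unit x, by
    intro i j f
    exact X.map_comp (x := none) (y := some i) (z := some j) f PUnit.unit x⟩
/-- The product of a diagram `F` with the Yoneda (corepresentable) diagram `C(d, −)`. -/
def yonProd {C : SCat} (F : SFunctor C) (d : C.Obj) : SFunctor C where
  obj c := F.obj c × C.Hom d c
  map f z := (F.map f z.1, C.comp f z.2)
  map_id z := by
    obtain ⟨a, g⟩ := z
    show (F.map (C.id _) a, C.comp (C.id _) g) = (a, g)
    rw [F.map_id, C.id_comp]
  map_comp g f z := by
    obtain ⟨a, u⟩ := z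
    show (F.map g (F.map f a), C.comp g (C.comp f u)) = (F.map (C.comp g f) a, C.comp (C.comp g f) u)
    rw [F.map_comp, C.assoc]

/-- The exponential diagram `[F, X]`, defined via Yoneda:
`[F, X](d) = Nat(F × C(d,−), X)`. -/
def expF {C : SCat} (F X : SFunctor C) : SFunctor C where
  obj d := SNat (yonProd F d) X
  map {d d'} h η :=
    ⟨fun c z => η.app c (z.1, C.comp z.2 h), by
      intro c c' f z
      refine (η.nat f (z.1, C.comp z.2 h)).trans ?_
      show η.app c' (F.map f z.1, C.comp f (C.comp z.2 h)) = η.app c' (F.map f z.1, C.comp (C.comp f z.2) h)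
      rw [C.assoc]⟩
  map_id {d} η := by
    apply SNat.ext'
    funext c z
    show η.app c (z.1, C.comp z.2 (C.id d)) = η.app c z
    rw [C.comp_id]
    rfl
  map_comp g f η := by
    apply SNat.ext'
    funext c z
    show η.app c (z.1, C.comp (C.comp z.2 g) f) = η.app c (z.1, C.comp z.2 (C.comp g f))
    rw [C.assoc]

/-- Whiskering a natural transformation with the Yoneda factor. -/
def prodWhisker {C : SCat} {F G : SFunctor C} (τ : SNat F G) (d : C.Obj) :
    SNat (yonProd F d) (yonProd G d) :=
  ⟨fun c z => (τ.app c z.1, z.2), by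
    intro c c' f z
    show (G.map f (τ.app c z.1), C.comp f z.2) = (τ.app c' (F.map f z.1), C.comp f z.2)
    rw [τ.nat]⟩

/-- The natural transformation `(− ∘ τ) : [G, X] → [F, X]` induced on exponentials
by precomposition with `τ : F → G`. -/
def expMap {C : SCat} {F G : SFunctor C} (τ : SNat F G) (X : SFunctor C) :
    SNat (expF G X) (expF F X) :=
  ⟨fun d η => natComp η (prodWhisker τ d), fun _ _ => SNat.ext' rfl⟩
/-- Morphisms `[m] → [k]` of the semi-simplex category `Δ₊ᵒᵖ`:
strictly monotone maps `Fin (k+1) → Fin (m+1)`. -/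
def DeltaHom (m k : ℕ) : Type := { f : Fin (k+1) → Fin (m+1) // StrictMono f }

/-- The semi-simplex category `Δ₊ᵒᵖ`. -/
@[reducible] def DeltaOp : SCat where
  Obj := ℕ
  Hom := DeltaHom
  id _ := ⟨_root_.id, strictMono_id⟩
  comp g f := ⟨f.1 ∘ g.1, f.2.comp g.2⟩
  id_comp _ := Subtype.ext rfl
  comp_id _ := Subtype.ext rfl
  assoc _ _ _ := Subtype.ext rfl

/-- A semi-simplicial set/type is a diagram on `Δ₊ᵒᵖ`. -/
abbrev SSDiagram : Type 1 := SFunctor DeltaOp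

theorem strictMono_fin_le {a b : ℕ} (g : Fin a → Fin b) (hg : StrictMono g) : a ≤ b := by
  simpa using Fintype.card_le_of_injective g hg.injective

set_option linter.deprecated false in
theorem strictMono_fin_id {a : ℕ} (g : Fin a → Fin a) (hg : StrictMono g) :
    ∀ i, g i = i := by
  have hsur : Function.Surjective g := Finite.injective_iff_surjective.mp hg.injective
  have hid : g = fun i => i := by
    apply (StrictMono.range_inj hg strictMono_id).mp
    rw [Set.range_id]
    exact Set.range_eq_univ.mpr hsur
  intro i; rw [hid]

/-- A subfunctor of the Yoneda (representable) semi-simplicial set `Δ^n`,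
given by a family of propositions closed under the functorial action. -/
structure SubP (n : ℕ) : Type where
  mem : ∀ k : ℕ, DeltaHom n k → Prop
  closed : ∀ ⦃k l : ℕ⦄ (g : DeltaHom k l) (f : DeltaHom n k),
    mem k f → mem l (DeltaOp.comp g f)

/-- The semi-simplicial set associated to a subfunctor of `Δ^n`. -/
def SubP.toF {n : ℕ} (S : SubP n) : SSDiagram where
  obj k := { f : DeltaHom n k // S.mem k f }
  map g f := ⟨DeltaOp.comp g f.1, S.closed g f.1 f.2⟩
  map_id _ := Subtype.ext (DeltaOp.id_comp _)
  map_comp _ _ _ := Subtype.ext (DeltaOp.assoc _ _ _).symm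

def SubP.le {n : ℕ} (S S' : SubP n) : Prop := ∀ k f, S.mem k f → S'.mem k f

/-- The inclusion of sub-semi-simplicial sets. -/
def SubP.incl {n : ℕ} {S S' : SubP n} (h : S.le S') : SNat S.toF S'.toF :=
  ⟨fun k f => ⟨f.1, h k f.1 f.2⟩, fun _ _ => rfl⟩

/-- The full subfunctor, i.e. the representable `Δ^n` itself. -/
def fullSub (n : ℕ) : SubP n := ⟨fun _ _ => True, by intros; trivial⟩

/-- The membership predicate of the spine `Sp^n`: all vertices, together with
the consecutive edges `i → i+1`. -/
def spineMem (n : ℕ) : ∀ k : ℕ, DeltaHom n k → Prop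
  | 0, _ => True
  | 1, f => (f.1 1 : ℕ) = (f.1 0 : ℕ) + 1
  | _ + 2, _ => False

/-- The spine `Sp^n` as a subfunctor of `Δ^n`. -/
def spineSub (n : ℕ) : SubP n where
  mem := spineMem n
  closed := by
    intro k l g f hf
    have hlk : l + 1 ≤ k + 1 := strictMono_fin_le g.1 g.2
    rcases l with _ | _ | l
    · trivial
    · rcases k with _ | _ | k
      · exact absurd hlk (by omega)
      · show ((f.1 (g.1 1) : Fin (n+1)) : ℕ) = ((f.1 (g.1 0) : Fin (n+1)) : ℕ) + 1
        have h0 : g.1 0 = 0 := strictMono_fin_id g.1 g.2 0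
        have h1 : g.1 1 = 1 := strictMono_fin_id g.1 g.2 1
        rw [h0, h1]
        exact hf
      · exact hf.elim
    · rcases k with _ | _ | k
      · exact absurd hlk (by omega)
      · exact absurd hlk (by omega)
      · exact hf.elim

/-- The membership predicate of the horn `Λ^n_k`: everything except the top cell
and the `k`-th face (the strictly monotone map skipping the value `k`,
described numerically). -/
def hornMem (n k : ℕ) (m : ℕ) (f : DeltaHom n m) : Prop :=
  if m = n then False
  else if m + 1 = n then
    ¬ (∀ i : Fin (m + 1), (f.1 i : ℕ) = if (i : ℕ) < k then (i : ℕ) else (i : ℕ) + 1)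
  else True

/-- The horn `Λ^n_k` as a subfunctor of `Δ^n`. -/
def hornSub (n k : ℕ) : SubP n where
  mem := hornMem n k
  closed := by
    intro m l g f hf
    have hlm : l + 1 ≤ m + 1 := strictMono_fin_le g.1 g.2
    have hmn : m + 1 ≤ n + 1 := strictMono_fin_le f.1 f.2
    unfold hornMem at hf ⊢
    by_cases hl : l = n
    · rw [if_pos hl]
      have hm : m = n := by omega
      rw [if_pos hm] at hf
      exact hf
    · rw [if_neg hl]
      by_cases hl1 : l + 1 = n
      · rw [if_pos hl1]
        by_cases hm : m = n
        · rw [if_pos hm] at hf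
          exact hf.elim
        · have hm1 : m + 1 = n := by omega
          rw [if_neg hm, if_pos hm1] at hf
          intro hs
          apply hf
          intro i
          have hml : m = l := by omega
          subst hml
          have hgi : g.1 i = i := strictMono_fin_id g.1 g.2 i
          have h2 : ((f.1 (g.1 i) : Fin (n+1)) : ℕ) =
              if (i : ℕ) < k then (i : ℕ) else (i : ℕ) + 1 := hs i
          rw [hgi] at h2
          exact h2
      · rw [if_neg hl1]
        trivial

/-- The spine is contained in `Δ^n`. -/
theorem spine_le_full (n : ℕ) : (spineSub n).le (fullSub n) := fun _ _ _ => trivial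

/-- The horn is contained in `Δ^n`. -/
theorem horn_le_full (n k : ℕ) : (hornSub n k).le (fullSub n) := fun _ _ _ => trivial

/-- The two vertex inclusions of an edge. -/
def V0 : DeltaHom 1 0 :=
  ⟨fun _ => 0, by
    intro a b hab
    exfalso
    have ha := a.isLt
    have hb := b.isLt
    rw [Fin.lt_def] at hab
    omega⟩

def V1 : DeltaHom 1 0 :=
  ⟨fun _ => 1, by
    intro a b hab
    exfalso
    have ha := a.isLt
    have hb := b.isLt
    rw [Fin.lt_def] at hab
    omega⟩

/-- The three faces of a 2-simplex: `Dface j` skips the vertex `j`. -/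
def Dface (j : Fin 3) : DeltaHom 2 1 := ⟨Fin.succAbove j, Fin.strictMono_succAbove j⟩

/-- The fibre of `X₁` over a pair of vertices: edges from `a` to `b`. -/
def EdgeT (X : SSDiagram) (a b : X.obj 0) : Type :=
  { e : X.obj 1 // X.map (x := 1) (y := 0) V0 e = a ∧ X.map (x := 1) (y := 0) V1 e = b }

/-- The fibre of `X₂` over a boundary triangle `(f, g, h)`. -/
def TriT (X : SSDiagram) {a b c : X.obj 0}
    (f : EdgeT X a b) (g : EdgeT X b c) (h : EdgeT X a c) : Type :=
  { t : X.obj 2 // X.map (x := 2) (y := 1) (Dface 2) t = f.1 ∧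
      X.map (x := 2) (y := 1) (Dface 0) t = g.1 ∧ X.map (x := 2) (y := 1) (Dface 1) t = h.1 }

/-- The Segal condition: locality with respect to all spine inclusions. -/
def SegalCondition (T : TLTT) (X : SSDiagram) : Prop :=
  ∀ n : ℕ, TwoLevel.IsHEquiv T
    (fun η : SNat (fullSub n).toF X => natComp η (SubP.incl (spine_le_full n)))
/-- The type of homotopy equivalences (with respect to the fibrant identity
type) between two pretypes. -/
def HEquivT (T : TLTT) (A B : Type) : Type :=
  Σ f : A → B, Σ g : B → A, (∀ a, T.Id A (g (f a)) a) × (∀ b, T.Id B (f (g b)) b)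

/-- The identity equivalence. -/
def idEquivT (T : TLTT) (A : Type) : HEquivT T A A :=
  ⟨_root_.id, _root_.id, fun a => T.idRefl a, fun b => T.idRefl b⟩

/-!
Fix a rank function `ρ` on `C` and build `Y` one rank at a time. A stage at level `k` is the
factorisation `X → Y → Z` on the objects of rank `< k`, with fibrant values, levelwise homotopy
equivalences `X → Y` and relative matching maps that are fibrations. For `n` of rank `k`, the
relative matching object `M_n^Y ×_{M_n^Z} Z_n` is the sum over `z : Z_n` of the limit over `n ⫽ C`
of the fibres of `Y → Z` over `z`; that diagram is Reedy fibrant because the earlier relative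
matching maps are fibrations, so admissibility makes the relative matching object essentially
fibrant. The mapping cocylinder of `X_n → M_n^Y ×_{M_n^Z} Z_n` then factors it as a homotopy
equivalence followed by a fibration, and its middle object is `Y_n`. Each stage agrees with the
previous one below the lower level, so the stages assemble into one diagram. The Reedy fibrant
replacement is the case `Z = 1`.
-/

namespace TwoLevel

variable {T : TLTT}

theorem EssFib.of_equiv {A B : Type} (e : A ≃ B) (h : EssFib T B) : EssFib T A := by
  obtain ⟨F, hF, ⟨u⟩⟩ := h
  exact ⟨F, hF, ⟨e.trans u⟩⟩

theorem EssFib.of_fib {A : Type} (h : T.Fib A) : EssFib T A :=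
  ⟨A, h, ⟨Equiv.refl A⟩⟩

theorem EssFib.sigma {A : Type} {B : A → Type} (hA : T.Fib A) (hB : ∀ a, EssFib T (B a)) :
    EssFib T (Σ a, B a) := by
  choose F hF e using hB
  exact ⟨Σ a, F a, T.fibSigma hA hF,
    ⟨Equiv.sigmaCongrRight fun a => Classical.choice (e a)⟩⟩

noncomputable def EssFib.repl {A : Type} (h : EssFib T A) : Type := h.choose

theorem EssFib.fib_repl {A : Type} (h : EssFib T A) : T.Fib h.repl := h.choose_spec.1

noncomputable def EssFib.equivRepl {A : Type} (h : EssFib T A) : A ≃ h.repl :=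
  Classical.choice h.choose_spec.2

theorem IsFibration.of_comm_sq {E B E' B' : Type} {p : E → B} {p' : E' → B'}
    (eE : E ≃ E') (eB : B ≃ B') (comm : ∀ x, p' (eE x) = eB (p x))
    (hp : IsFibration T p) : IsFibration T p' := by
  intro b'
  refine (hp (eB.symm b')).of_equiv (Equiv.subtypeEquiv eE.symm fun x' => ?_)
  rw [Equiv.eq_symm_apply, ← comm, Equiv.apply_symm_apply]

theorem IsHEquiv.cast_comp {A B B' : Type} (h : B = B') {f : A → B} (hf : IsHEquiv T f) :
    IsHEquiv T (fun a => cast h (f a)) := by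
  subst h
  exact hf

end TwoLevel

open TwoLevel

def MapCocyl (T : TLTT) {A B : Type} (c : A → B) : Type :=
  Σ a : A, Σ b : B, T.Id B (c a) b

namespace MapCocyl

variable (T : TLTT) {A B : Type} (c : A → B)

def incl (a : A) : MapCocyl T c := ⟨a, c a, T.idRefl _⟩

variable {T c}

def proj (s : MapCocyl T c) : B := s.2.1

theorem fib (hA : T.Fib A) (hB : T.Fib B) : T.Fib (MapCocyl T c) :=
  T.fibSigma hA fun _ => T.fibSigma hB fun _ => T.fibId hB _ _

theorem isHEquiv_incl (hA : T.Fib A) (hB : T.Fib B) : IsHEquiv T (incl T c) := by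
  refine ⟨fun s => s.1, fun a => ⟨T.idRefl a⟩, ?_⟩
  rintro ⟨a, b, e⟩
  exact ⟨T.idElim (c a) (fun b e => T.Id (MapCocyl T c) (incl T c a) ⟨a, b, e⟩)
    (fun _ _ => T.fibId (fib hA hB) _ _) (T.idRefl _) b e⟩

def fibreEquiv (b : B) : { s : MapCocyl T c // proj s = b } ≃ Σ a : A, T.Id B (c a) b where
  toFun s := ⟨s.1.1, cast (congrArg (T.Id B (c s.1.1)) s.2) s.1.2.2⟩
  invFun t := ⟨⟨t.1, b, t.2⟩, rfl⟩
  left_inv := by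
    rintro ⟨⟨a, b, e⟩, rfl⟩
    rfl
  right_inv _ := rfl

theorem isFibration_proj (hA : T.Fib A) (hB : T.Fib B) :
    IsFibration T (proj : MapCocyl T c → B) := fun b =>
  (EssFib.of_fib (T.fibSigma hA fun _ => T.fibId hB _ _)).of_equiv (fibreEquiv b)

end MapCocyl

theorem notId_of_rank_lt {C : SCat} (φ : C.Obj → ℕ) {x y : C.Obj} (g : C.Hom x y)
    (h : φ y < φ x) : NotId C g := by
  rintro ⟨rfl, -⟩
  exact lt_irrefl _ h

structure RankFunction (C : SCat) where
  rank : C.Obj → ℕ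
  spec : ∀ ⦃x y⦄ (f : C.Hom x y), rank x > rank y ∨ ∃ _ : x = y, HEq f (C.id x)

namespace RankFunction

variable {C : SCat} (ρ : RankFunction C)

instance : CoeFun (RankFunction C) (fun _ => C.Obj → ℕ) := ⟨rank⟩

theorem rank_le {x y : C.Obj} (g : C.Hom x y) : ρ y ≤ ρ x := by
  rcases ρ.spec g with h | ⟨rfl, -⟩
  · exact h.le
  · exact le_rfl

theorem lt_succ_of_hom {x y : C.Obj} (g : C.Hom x y) : ρ y < ρ x + 1 :=
  Nat.lt_succ_of_le (ρ.rank_le g)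

theorem eq_id_of_rank_le {x y : C.Obj} (g : C.Hom x y) (h : ρ x ≤ ρ y) :
    ∃ _ : x = y, HEq g (C.id x) :=
  (ρ.spec g).resolve_left (not_lt.mpr h)

theorem rank_lt_of_notId {x y : C.Obj} (g : C.Hom x y) (hg : NotId C g) : ρ y < ρ x :=
  (ρ.spec g).resolve_right hg

theorem redCoslice_lt {n : C.Obj} (w : RedCoslice C n) {k : ℕ} (hn : ρ n ≤ k) : ρ w.1 < k :=
  lt_of_lt_of_le (ρ.rank_lt_of_notId w.2.1 w.2.2) hn

def redCoslice (n : C.Obj) : RankFunction (RedCosliceCat C n) where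
  rank w := ρ w.1
  spec := by
    rintro ⟨y, g, hg⟩ ⟨y', g', hg'⟩ ⟨h, hh⟩
    rcases ρ.spec h with hlt | ⟨rfl, hid⟩
    · exact Or.inl hlt
    · obtain rfl := eq_of_heq hid
      change C.comp (C.id y) g = g' at hh
      rw [C.id_comp] at hh
      subst hh
      exact Or.inr ⟨rfl, heq_of_eq (Subtype.ext rfl)⟩

def redCosliceEquiv {n : C.Obj} (w : RedCoslice C n) :
    RedCoslice C w.1 ≃ RedCoslice (RedCosliceCat C n) w where
  toFun v := ⟨⟨v.1, C.comp v.2.1 w.2.1,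
      notId_of_rank_lt ρ _ (lt_trans (ρ.redCoslice_lt v le_rfl) (ρ.redCoslice_lt w le_rfl))⟩,
    ⟨v.2.1, rfl⟩, notId_of_rank_lt (ρ.redCoslice n) _ (ρ.redCoslice_lt v le_rfl)⟩
  invFun u :=
    ⟨u.1.1, u.2.1.1, notId_of_rank_lt ρ _ ((ρ.redCoslice n).rank_lt_of_notId _ u.2.2)⟩
  left_inv _ := rfl
  right_inv := by
    rintro ⟨⟨y, g, hg⟩, ⟨h, hh⟩, hid⟩
    change C.Hom w.1 y at h
    change C.comp h w.2.1 = g at hh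
    revert hid
    subst hh
    intro _
    rfl

end RankFunction

namespace ReedyFactorisation

variable {C : SCat} (ρ : RankFunction C) {X Z : SFunctor C} (f : SNat X Z)

/-- The factorisation `X → Y → Z` of `f`, built on the objects of rank `< k`. -/
structure PreStage (k : ℕ) : Type 1 where
  obj : ∀ n, ρ n < k → Type
  map : ∀ {a b : C.Obj}, C.Hom a b → ∀ (ha : ρ a < k) (hb : ρ b < k), obj a ha → obj b hb
  map_id : ∀ n (h : ρ n < k) (y : obj n h), map (C.id n) h h y = y
  map_comp : ∀ {a b c : C.Obj} (g : C.Hom b c) (g' : C.Hom a b) (ha : ρ a < k) (hb : ρ b < k)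
    (hc : ρ c < k) (y : obj a ha), map g hb hc (map g' ha hb y) = map (C.comp g g') ha hc y
  incl : ∀ n (h : ρ n < k), X.obj n → obj n h
  proj : ∀ n (h : ρ n < k), obj n h → Z.obj n
  incl_nat : ∀ {a b : C.Obj} (g : C.Hom a b) (ha : ρ a < k) (hb : ρ b < k) (x : X.obj a),
    map g ha hb (incl a ha x) = incl b hb (X.map g x)
  proj_nat : ∀ {a b : C.Obj} (g : C.Hom a b) (ha : ρ a < k) (hb : ρ b < k) (y : obj a ha),
    Z.map g (proj a ha y) = proj b hb (map g ha hb y)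
  proj_incl : ∀ n (h : ρ n < k) (x : X.obj n), proj n h (incl n h x) = f.app n x

namespace PreStage

variable {ρ f} {k : ℕ} (P : PreStage ρ f k)

/-- The pullback `M_n^Y ×_{M_n^Z} Z_n`; it only involves objects of rank `< ρ n ≤ k`. -/
@[ext]
structure RelMatching (n : C.Obj) (hn : ρ n ≤ k) : Type where
  cone : ∀ w : RedCoslice C n, P.obj w.1 (ρ.redCoslice_lt w hn)
  map_cone : ∀ ⦃w w' : RedCoslice C n⦄ (h : (RedCosliceCat C n).Hom w w'),
    P.map h.1 _ _ (cone w) = cone w'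
  base : Z.obj n
  proj_cone : ∀ w, P.proj w.1 _ (cone w) = Z.map w.2.1 base

def relMatch (n : C.Obj) (hn : ρ n < k) (y : P.obj n hn) : P.RelMatching n hn.le where
  cone w := P.map w.2.1 hn _ y
  map_cone w w' h := by rw [P.map_comp, h.2]
  base := P.proj n hn y
  proj_cone w := (P.proj_nat _ _ _ y).symm

def relMatchX (n : C.Obj) (hn : ρ n ≤ k) (x : X.obj n) : P.RelMatching n hn where
  cone w := P.incl w.1 _ (X.map w.2.1 x)
  map_cone w w' h := by rw [P.incl_nat, X.map_comp, h.2]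
  base := f.app n x
  proj_cone w := by rw [P.proj_incl]; exact (f.nat _ x).symm

def fibreDiagram (n : C.Obj) (hn : ρ n ≤ k) (z : Z.obj n) : SFunctor (RedCosliceCat C n) where
  obj w := { y : P.obj w.1 (ρ.redCoslice_lt w hn) // P.proj w.1 _ y = Z.map w.2.1 z }
  map h y := ⟨P.map h.1 _ _ y.1, by rw [← P.proj_nat, y.2, Z.map_comp, h.2]⟩
  map_id y := Subtype.ext (P.map_id _ _ _)
  map_comp _ _ y := Subtype.ext (P.map_comp _ _ _ _ _ _)

def relMatchingEquivSigma (n : C.Obj) (hn : ρ n ≤ k) :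
    P.RelMatching n hn ≃ Σ z : Z.obj n, SLimit (RedCosliceCat C n) (P.fibreDiagram n hn z) where
  toFun q :=
    ⟨q.base, fun w => ⟨q.cone w, q.proj_cone w⟩, fun _ _ h => Subtype.ext (q.map_cone h)⟩
  invFun s := ⟨fun w => (s.2.1 w).1, fun _ _ h => congrArg Subtype.val (s.2.2 h), s.1,
    fun w => (s.2.1 w).2⟩
  left_inv _ := rfl
  right_inv _ := rfl

variable {T : TLTT}

def relMatchingOfFibreMatching {n : C.Obj} {hn : ρ n ≤ k} {z : Z.obj n} (w : RedCoslice C n)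
    (μ : Matching (P.fibreDiagram n hn z) w) :
    P.RelMatching w.1 (ρ.redCoslice_lt w hn).le where
  cone v := (μ.1 (ρ.redCosliceEquiv w v)).1
  map_cone v v' h := congrArg Subtype.val
    (μ.2 (⟨⟨h.1, (C.assoc _ _ _).symm.trans (congrArg (C.comp · w.2.1) h.2)⟩,
        Subtype.ext h.2⟩ :
      (RedCosliceCat (RedCosliceCat C n) w).Hom (ρ.redCosliceEquiv w v)
        (ρ.redCosliceEquiv w v')))
  base := Z.map w.2.1 z
  proj_cone v := by rw [Z.map_comp]; exact (μ.1 (ρ.redCosliceEquiv w v)).2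

theorem reedyFibrant_fibreDiagram (hP : ∀ m (h : ρ m < k), IsFibration T (P.relMatch m h))
    (n : C.Obj) (hn : ρ n ≤ k) (z : Z.obj n) : ReedyFibrant T (P.fibreDiagram n hn z) := by
  intro w μ
  refine (hP w.1 _ (P.relMatchingOfFibreMatching w μ)).of_equiv
    { toFun := fun γ => ⟨γ.1.1, RelMatching.ext
          (funext fun v => congrArg (fun c => (c.1 (ρ.redCosliceEquiv w v)).1) γ.2) γ.1.2⟩
      invFun := fun y => ⟨⟨y.1, congrArg RelMatching.base y.2⟩,
        Subtype.ext <| funext fun u => by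
          obtain ⟨v, rfl⟩ := (ρ.redCosliceEquiv w).surjective u
          exact Subtype.ext (congrFun (congrArg RelMatching.cone y.2) v)⟩
      left_inv := fun _ => rfl
      right_inv := fun _ => rfl }

theorem essFib_relMatching (hAdm : Admissible T C) (hZ : ∀ n, T.Fib (Z.obj n))
    (hP : ∀ m (h : ρ m < k), IsFibration T (P.relMatch m h)) (n : C.Obj) (hn : ρ n ≤ k) :
    EssFib T (P.RelMatching n hn) :=
  (EssFib.sigma (hZ n) fun z => hAdm n _ (P.reedyFibrant_fibreDiagram hP n hn z)).of_equiv
    (P.relMatchingEquivSigma n hn)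

variable {k' k'' : ℕ}

structure Agree (P : PreStage ρ f k) (Q : PreStage ρ f k') : Prop where
  obj_eq : ∀ n (h : ρ n < k) (h' : ρ n < k'), P.obj n h = Q.obj n h'
  map_heq : ∀ {a b : C.Obj} (g : C.Hom a b) ha hb ha' hb' (x : P.obj a ha) (y : Q.obj a ha'),
    HEq x y → HEq (P.map g ha hb x) (Q.map g ha' hb' y)
  incl_heq : ∀ n h h' (x : X.obj n), HEq (P.incl n h x) (Q.incl n h' x)
  proj_eq : ∀ n h h' (x : P.obj n h) (y : Q.obj n h'), HEq x y → P.proj n h x = Q.proj n h' y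

namespace Agree

variable {P : PreStage ρ f k} {Q : PreStage ρ f k'} {R : PreStage ρ f k''}

theorem refl (P : PreStage ρ f k) : Agree P P where
  obj_eq _ _ _ := rfl
  map_heq _ _ _ _ _ _ _ hxy := by cases hxy; rfl
  incl_heq _ _ _ _ := HEq.rfl
  proj_eq _ _ _ _ _ hxy := by cases hxy; rfl

theorem symm (hPQ : Agree P Q) : Agree Q P where
  obj_eq n h h' := (hPQ.obj_eq n h' h).symm
  map_heq g _ _ _ _ _ _ hxy := (hPQ.map_heq g _ _ _ _ _ _ hxy.symm).symm
  incl_heq n _ _ x := (hPQ.incl_heq n _ _ x).symm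
  proj_eq _ _ _ _ _ hxy := (hPQ.proj_eq _ _ _ _ _ hxy.symm).symm

theorem trans (hPQ : Agree P Q) (hQR : Agree Q R) (hk : k ≤ k') : Agree P R where
  obj_eq n h h' := (hPQ.obj_eq n h (h.trans_le hk)).trans (hQR.obj_eq n _ h')
  map_heq g ha hb _ _ x _ hxz :=
    have hxy := (cast_heq (hPQ.obj_eq _ ha (ha.trans_le hk)) x).symm
    (hPQ.map_heq g _ _ (ha.trans_le hk) (hb.trans_le hk) _ _ hxy).trans
      (hQR.map_heq g _ _ _ _ _ _ (hxy.symm.trans hxz))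
  incl_heq n h _ x := (hPQ.incl_heq n h (h.trans_le hk) x).trans (hQR.incl_heq n _ _ x)
  proj_eq n h _ x _ hxz :=
    have hxy := (cast_heq (hPQ.obj_eq n h (h.trans_le hk)) x).symm
    (hPQ.proj_eq _ _ _ _ _ hxy).trans (hQR.proj_eq _ _ _ _ _ (hxy.symm.trans hxz))

theorem of_succ (S : ∀ k, PreStage ρ f k) (hS : ∀ k, Agree (S k) (S (k + 1))) (k k' : ℕ) :
    Agree (S k) (S k') := by
  have up : ∀ k k', k ≤ k' → Agree (S k) (S k') := fun k k' hk => by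
    induction k', hk using Nat.le_induction with
    | base => exact refl _
    | succ k' hk ih => exact ih.trans (hS k') hk
  rcases le_total k k' with hk | hk
  · exact up k k' hk
  · exact (up k' k hk).symm

def relMatchingMap (hPQ : Agree P Q) (n : C.Obj) (h : ρ n ≤ k) (h' : ρ n ≤ k')
    (q : P.RelMatching n h) : Q.RelMatching n h' where
  cone w := cast (hPQ.obj_eq w.1 _ _) (q.cone w)
  map_cone _ _ u := eq_of_heq <|
    (hPQ.map_heq u.1 _ _ _ _ _ _ (cast_heq _ _).symm).symm.trans
      ((heq_of_eq (q.map_cone u)).trans (cast_heq _ _).symm)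
  base := q.base
  proj_cone w := (hPQ.proj_eq _ _ _ _ _ (cast_heq _ _).symm).symm.trans (q.proj_cone w)

def relMatchingEquiv (hPQ : Agree P Q) (n : C.Obj) (h : ρ n ≤ k) (h' : ρ n ≤ k') :
    P.RelMatching n h ≃ Q.RelMatching n h' where
  toFun := hPQ.relMatchingMap n h h'
  invFun := hPQ.symm.relMatchingMap n h' h
  left_inv _ := RelMatching.ext (funext fun _ => cast_cast _ _ _) rfl
  right_inv _ := RelMatching.ext (funext fun _ => cast_cast _ _ _) rfl

theorem relMatchingMap_relMatch (hPQ : Agree P Q) (n : C.Obj) (h : ρ n < k) (h' : ρ n < k')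
    (x : P.obj n h) (y : Q.obj n h') (hxy : HEq x y) :
    hPQ.relMatchingMap n h.le h'.le (P.relMatch n h x) = Q.relMatch n h' y :=
  RelMatching.ext
    (funext fun _ => eq_of_heq ((cast_heq _ _).trans (hPQ.map_heq _ _ _ _ _ _ _ hxy)))
    (hPQ.proj_eq _ _ _ _ _ hxy)

theorem isFibration_relMatch (hPQ : Agree P Q) (n : C.Obj) (h : ρ n < k) (h' : ρ n < k')
    (hP : IsFibration T (P.relMatch n h)) : IsFibration T (Q.relMatch n h') :=
  hP.of_comm_sq (Equiv.cast (hPQ.obj_eq n h h')) (hPQ.relMatchingEquiv n h.le h'.le)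
    fun x => (hPQ.relMatchingMap_relMatch n h h' x _ (cast_heq _ x).symm).symm

end Agree

variable (ρ) {Y : SFunctor C}

def ofFactorisation (i : SNat X Y) (p : SNat Y Z) (hpi : ∀ n x, p.app n (i.app n x) = f.app n x)
    (k : ℕ) : PreStage ρ f k where
  obj n _ := Y.obj n
  map g _ _ := Y.map g
  map_id _ _ := Y.map_id
  map_comp g g' _ _ _ := Y.map_comp g g'
  incl n _ := i.app n
  proj n _ := p.app n
  incl_nat g _ _ := i.nat g
  proj_nat g _ _ := p.nat g
  proj_incl n _ := hpi n

variable {ρ}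

theorem isReedyFibration_of_ofFactorisation {i : SNat X Y} {p : SNat Y Z}
    {hpi : ∀ n x, p.app n (i.app n x) = f.app n x}
    (h : ∀ n, IsFibration T
      ((ofFactorisation ρ i p hpi (ρ n + 1)).relMatch n (Nat.lt_succ_self _))) :
    IsReedyFibration T p := fun n =>
  (h n).of_comm_sq (Equiv.refl _)
    { toFun := fun q => ⟨(⟨q.cone, q.map_cone⟩, q.base), Subtype.ext (funext q.proj_cone)⟩
      invFun := fun s =>
        ⟨s.1.1.1, s.1.1.2, s.1.2, fun w => congrFun (congrArg Subtype.val s.2) w⟩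
      left_inv := fun _ => rfl
      right_inv := fun _ => rfl }
    fun _ => rfl

section Limit

variable (S : ∀ k, PreStage ρ f k) (hS : ∀ k k', Agree (S k) (S k'))

def limit : SFunctor C where
  obj n := (S (ρ n + 1)).obj n (Nat.lt_succ_self _)
  map {a b} g y := cast ((hS _ _).obj_eq b (ρ.lt_succ_of_hom g) _)
    ((S (ρ a + 1)).map g _ (ρ.lt_succ_of_hom g) y)
  map_id y := eq_of_heq ((cast_heq _ _).trans (heq_of_eq ((S _).map_id _ _ y)))
  map_comp g g' _ := eq_of_heq <|
    ((cast_heq _ _).trans ((hS _ _).map_heq g _ _ (ρ.lt_succ_of_hom g')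
      ((ρ.lt_succ_of_hom g).trans_le (ρ.lt_succ_of_hom g')) _ _ (cast_heq _ _))).trans
    ((heq_of_eq ((S _).map_comp _ _ _ _ _ _)).trans (cast_heq _ _).symm)

theorem limit_map_heq {a b : C.Obj} (g : C.Hom a b) (K : ℕ) (ha : ρ a < K) (hb : ρ b < K)
    (y : (limit S hS).obj a) (x : (S K).obj a ha) (hxy : HEq y x) :
    HEq ((limit S hS).map g y) ((S K).map g ha hb x) :=
  (cast_heq _ _).trans ((hS _ K).map_heq g _ _ ha hb y x hxy)

def limitIncl : SNat X (limit S hS) where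
  app n := (S (ρ n + 1)).incl n (Nat.lt_succ_self _)
  nat g x := eq_of_heq <|
    (limit_map_heq S hS g _ _ (ρ.lt_succ_of_hom g) _ _ HEq.rfl).trans
      ((heq_of_eq ((S _).incl_nat g _ _ x)).trans ((hS _ _).incl_heq _ _ _ _))

def limitProj : SNat (limit S hS) Z where
  app n := (S (ρ n + 1)).proj n (Nat.lt_succ_self _)
  nat g y := ((S _).proj_nat g _ (ρ.lt_succ_of_hom g) y).trans
    ((hS _ _).proj_eq _ _ _ _ _ (cast_heq _ _).symm)

theorem limitProj_limitIncl (n : C.Obj) (x : X.obj n) :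
    (limitProj S hS).app n ((limitIncl S hS).app n x) = f.app n x :=
  (S _).proj_incl _ _ x

theorem agree_limit (K : ℕ) :
    Agree (S K)
      (ofFactorisation ρ (limitIncl S hS) (limitProj S hS) (limitProj_limitIncl S hS) K) where
  obj_eq n h _ := (hS K _).obj_eq n h _
  map_heq g ha hb _ _ x y hxy := (limit_map_heq S hS g K ha hb y x hxy.symm).symm
  incl_heq n h _ x := (hS K _).incl_heq n h _ x
  proj_eq n h _ x y hxy := (hS K _).proj_eq n h _ x y hxy

end Limit

end PreStage

structure Stage (T : TLTT) (k : ℕ) extends PreStage ρ f k where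
  fib_obj : ∀ n h, T.Fib (obj n h)
  isHEquiv_incl : ∀ n h, IsHEquiv T (incl n h)
  isFibration_relMatch : ∀ n h, IsFibration T (toPreStage.relMatch n h)

namespace Stage

variable {T : TLTT} {ρ f} {k : ℕ}

theorem exists_factorisation (S : ∀ k, Stage ρ f T k)
    (hS : ∀ k, (S k).Agree (S (k + 1)).toPreStage) :
    ∃ (Y : SFunctor C) (i : SNat X Y) (p : SNat Y Z), (∀ n, IsHEquiv T (i.app n)) ∧
      IsReedyFibration T p ∧ ∀ n x, p.app n (i.app n x) = f.app n x := by
  have hS' := PreStage.Agree.of_succ (fun k => (S k).toPreStage) hS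
  refine ⟨_, _, _, fun n => (S _).isHEquiv_incl n _, ?_, PreStage.limitProj_limitIncl _ hS'⟩
  exact PreStage.isReedyFibration_of_ofFactorisation fun n =>
    (PreStage.agree_limit _ hS' _).isFibration_relMatch n _ (Nat.lt_succ_self _)
      ((S _).isFibration_relMatch n (Nat.lt_succ_self _))

def zero : Stage ρ f T 0 where
  obj _ h := absurd h (Nat.not_lt_zero _)
  map _ ha := absurd ha (Nat.not_lt_zero _)
  map_id _ h := absurd h (Nat.not_lt_zero _)
  map_comp _ _ ha := absurd ha (Nat.not_lt_zero _)
  incl _ h := absurd h (Nat.not_lt_zero _)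
  proj _ h := absurd h (Nat.not_lt_zero _)
  incl_nat _ ha := absurd ha (Nat.not_lt_zero _)
  proj_nat _ ha := absurd ha (Nat.not_lt_zero _)
  proj_incl _ h := absurd h (Nat.not_lt_zero _)
  fib_obj _ h := absurd h (Nat.not_lt_zero _)
  isHEquiv_incl _ h := absurd h (Nat.not_lt_zero _)
  isFibration_relMatch _ h := absurd h (Nat.not_lt_zero _)

variable (P : Stage ρ f T k) (hR : ∀ n (hn : ρ n ≤ k), EssFib T (P.RelMatching n hn))

/-- The mapping cocylinder of `X_n → M_n^Y ×_{M_n^Z} Z_n`, after replacing the target by a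
fibrant type. -/
def newObj (n : C.Obj) (hn : ρ n ≤ k) : Type :=
  MapCocyl T fun x => (hR n hn).equivRepl (P.relMatchX n hn x)

noncomputable def newProj {n : C.Obj} {hn : ρ n ≤ k} (y : P.newObj hR n hn) :
    P.RelMatching n hn :=
  (hR n hn).equivRepl.symm (MapCocyl.proj y)

noncomputable def newIncl {n : C.Obj} {hn : ρ n ≤ k} (x : X.obj n) : P.newObj hR n hn :=
  MapCocyl.incl T _ x

theorem newProj_newIncl {n : C.Obj} {hn : ρ n ≤ k} (x : X.obj n) :
    P.newProj hR (P.newIncl hR x) = P.relMatchX n hn x :=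
  Equiv.symm_apply_apply _ _

theorem isFibration_newProj (hX : ∀ n, T.Fib (X.obj n)) (n : C.Obj) (hn : ρ n ≤ k) :
    IsFibration T (P.newProj hR (hn := hn)) :=
  (MapCocyl.isFibration_proj (hX n) (EssFib.fib_repl _)).of_comm_sq (Equiv.refl _)
    (hR n hn).equivRepl.symm fun _ => rfl

def extObj (n : C.Obj) (h : ρ n < k + 1) : Type :=
  if h' : ρ n < k then P.obj n h' else P.newObj hR n (Nat.le_of_lt_succ h)

theorem extObj_of_lt {n : C.Obj} (h : ρ n < k + 1) (h' : ρ n < k) :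
    P.extObj hR n h = P.obj n h' :=
  dif_pos h'

theorem extObj_of_not_lt {n : C.Obj} (h : ρ n < k + 1) (h' : ¬ ρ n < k) :
    P.extObj hR n h = P.newObj hR n (Nat.le_of_lt_succ h) :=
  dif_neg h'

noncomputable def extBelow {a b : C.Obj} (g : C.Hom a b) (ha : ρ a < k + 1) (hb : ρ b < k)
    (y : P.extObj hR a ha) : P.obj b hb :=
  if ha' : ρ a < k then P.map g ha' hb (cast (P.extObj_of_lt hR ha ha') y)
  else (P.newProj hR (cast (P.extObj_of_not_lt hR ha ha') y)).cone
    ⟨b, g, notId_of_rank_lt ρ g (by omega)⟩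

noncomputable def extMap {a b : C.Obj} (g : C.Hom a b) (ha : ρ a < k + 1) (hb : ρ b < k + 1)
    (y : P.extObj hR a ha) : P.extObj hR b hb :=
  if hb' : ρ b < k then cast (P.extObj_of_lt hR hb hb').symm (P.extBelow hR g ha hb' y)
  else cast (by obtain ⟨rfl, -⟩ := ρ.eq_id_of_rank_le g (by omega); rfl) y

noncomputable def extIncl (n : C.Obj) (h : ρ n < k + 1) (x : X.obj n) : P.extObj hR n h :=
  if h' : ρ n < k then cast (P.extObj_of_lt hR h h').symm (P.incl n h' x)
  else cast (P.extObj_of_not_lt hR h h').symm (P.newIncl hR x)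

noncomputable def extProj (n : C.Obj) (h : ρ n < k + 1) (y : P.extObj hR n h) : Z.obj n :=
  if h' : ρ n < k then P.proj n h' (cast (P.extObj_of_lt hR h h') y)
  else (P.newProj hR (cast (P.extObj_of_not_lt hR h h') y)).base

theorem extBelow_of_lt {a b : C.Obj} (g : C.Hom a b) (ha : ρ a < k + 1) (hb : ρ b < k)
    (ha' : ρ a < k) (y : P.extObj hR a ha) :
    P.extBelow hR g ha hb y = P.map g ha' hb (cast (P.extObj_of_lt hR ha ha') y) :=
  dif_pos ha'

theorem extBelow_of_not_lt {a b : C.Obj} (g : C.Hom a b) (ha : ρ a < k + 1) (hb : ρ b < k)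
    (ha' : ¬ ρ a < k) (y : P.extObj hR a ha) :
    P.extBelow hR g ha hb y = (P.newProj hR (cast (P.extObj_of_not_lt hR ha ha') y)).cone
      ⟨b, g, notId_of_rank_lt ρ g (by omega)⟩ :=
  dif_neg ha'

theorem extMap_of_lt {a b : C.Obj} (g : C.Hom a b) (ha : ρ a < k + 1) (hb : ρ b < k + 1)
    (hb' : ρ b < k) (y : P.extObj hR a ha) :
    P.extMap hR g ha hb y = cast (P.extObj_of_lt hR hb hb').symm (P.extBelow hR g ha hb' y) :=
  dif_pos hb'

theorem extIncl_of_lt {n : C.Obj} (h : ρ n < k + 1) (h' : ρ n < k) (x : X.obj n) :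
    P.extIncl hR n h x = cast (P.extObj_of_lt hR h h').symm (P.incl n h' x) :=
  dif_pos h'

theorem extIncl_of_not_lt {n : C.Obj} (h : ρ n < k + 1) (h' : ¬ ρ n < k) (x : X.obj n) :
    P.extIncl hR n h x = cast (P.extObj_of_not_lt hR h h').symm (P.newIncl hR x) :=
  dif_neg h'

theorem extProj_of_lt {n : C.Obj} (h : ρ n < k + 1) (h' : ρ n < k) (y : P.extObj hR n h) :
    P.extProj hR n h y = P.proj n h' (cast (P.extObj_of_lt hR h h') y) :=
  dif_pos h'

theorem extProj_of_not_lt {n : C.Obj} (h : ρ n < k + 1) (h' : ¬ ρ n < k) (y : P.extObj hR n h) :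
    P.extProj hR n h y = (P.newProj hR (cast (P.extObj_of_not_lt hR h h') y)).base :=
  dif_neg h'

theorem map_extBelow {a b c : C.Obj} (g : C.Hom b c) (g' : C.Hom a b) (ha : ρ a < k + 1)
    (hb : ρ b < k) (hc : ρ c < k) (y : P.extObj hR a ha) :
    P.map g hb hc (P.extBelow hR g' ha hb y) = P.extBelow hR (C.comp g g') ha hc y := by
  unfold extBelow
  split_ifs
  · exact P.map_comp _ _ _ _ _ _
  · exact (P.newProj hR _).map_cone (w := ⟨b, g', _⟩) (w' := ⟨c, C.comp g g', _⟩)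
      ⟨g, rfl⟩

theorem extBelow_extIncl {a b : C.Obj} (g : C.Hom a b) (ha : ρ a < k + 1) (hb : ρ b < k)
    (x : X.obj a) : P.extBelow hR g ha hb (P.extIncl hR a ha x) = P.incl b hb (X.map g x) := by
  unfold extBelow extIncl
  split_ifs
  · rw [cast_cast, cast_eq]
    exact P.incl_nat _ _ _ _
  · rw [cast_cast, cast_eq, newProj_newIncl]
    rfl

theorem proj_extBelow {a b : C.Obj} (g : C.Hom a b) (ha : ρ a < k + 1) (hb : ρ b < k)
    (y : P.extObj hR a ha) :
    P.proj b hb (P.extBelow hR g ha hb y) = Z.map g (P.extProj hR a ha y) := by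
  unfold extBelow extProj
  split_ifs
  · exact (P.proj_nat _ _ _ _).symm
  · exact (P.newProj hR _).proj_cone ⟨b, g, _⟩

theorem extMap_id (n : C.Obj) (h : ρ n < k + 1) (y : P.extObj hR n h) :
    P.extMap hR (C.id n) h h y = y := by
  unfold extMap
  split_ifs with h'
  · unfold extBelow
    rw [dif_pos h', P.map_id, cast_cast, cast_eq]
  · rfl

theorem extMap_comp {a b c : C.Obj} (g : C.Hom b c) (g' : C.Hom a b) (ha : ρ a < k + 1)
    (hb : ρ b < k + 1) (hc : ρ c < k + 1) (y : P.extObj hR a ha) :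
    P.extMap hR g hb hc (P.extMap hR g' ha hb y) = P.extMap hR (C.comp g g') ha hc y := by
  by_cases hb' : ρ b < k
  · have hc' : ρ c < k := lt_of_le_of_lt (ρ.rank_le g) hb'
    rw [P.extMap_of_lt hR _ _ _ hc', P.extMap_of_lt hR _ _ _ hc', P.extMap_of_lt hR _ _ _ hb',
      P.extBelow_of_lt hR _ _ _ hb', cast_cast, cast_eq, map_extBelow]
  · obtain ⟨rfl, hg'⟩ := ρ.eq_id_of_rank_le g' (by omega)
    obtain rfl := eq_of_heq hg'
    rw [extMap_id, C.comp_id]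

theorem extMap_extIncl {a b : C.Obj} (g : C.Hom a b) (ha : ρ a < k + 1) (hb : ρ b < k + 1)
    (x : X.obj a) :
    P.extMap hR g ha hb (P.extIncl hR a ha x) = P.extIncl hR b hb (X.map g x) := by
  by_cases hb' : ρ b < k
  · rw [P.extMap_of_lt hR _ _ _ hb', extBelow_extIncl, P.extIncl_of_lt hR _ hb']
  · obtain ⟨rfl, hg⟩ := ρ.eq_id_of_rank_le g (by omega)
    obtain rfl := eq_of_heq hg
    rw [extMap_id, X.map_id]

theorem map_extProj {a b : C.Obj} (g : C.Hom a b) (ha : ρ a < k + 1) (hb : ρ b < k + 1)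
    (y : P.extObj hR a ha) :
    Z.map g (P.extProj hR a ha y) = P.extProj hR b hb (P.extMap hR g ha hb y) := by
  by_cases hb' : ρ b < k
  · rw [P.extMap_of_lt hR _ _ _ hb', P.extProj_of_lt hR _ hb', cast_cast, cast_eq, proj_extBelow]
  · obtain ⟨rfl, hg⟩ := ρ.eq_id_of_rank_le g (by omega)
    obtain rfl := eq_of_heq hg
    rw [extMap_id, Z.map_id]

theorem extProj_extIncl (n : C.Obj) (h : ρ n < k + 1) (x : X.obj n) :
    P.extProj hR n h (P.extIncl hR n h x) = f.app n x := by
  by_cases h' : ρ n < k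
  · rw [P.extIncl_of_lt hR _ h', P.extProj_of_lt hR _ h', cast_cast, cast_eq, P.proj_incl]
  · rw [P.extIncl_of_not_lt hR _ h', P.extProj_of_not_lt hR _ h', cast_cast, cast_eq,
      newProj_newIncl]
    rfl

noncomputable def extPre : PreStage ρ f (k + 1) where
  obj := P.extObj hR
  map := P.extMap hR
  map_id := P.extMap_id hR
  map_comp := P.extMap_comp hR
  incl := P.extIncl hR
  proj := P.extProj hR
  incl_nat := P.extMap_extIncl hR
  proj_nat := P.map_extProj hR
  proj_incl := P.extProj_extIncl hR

theorem map_heq_extMap {a b : C.Obj} (g : C.Hom a b) (ha : ρ a < k) (hb : ρ b < k)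
    (ha' : ρ a < k + 1) (hb' : ρ b < k + 1) (x : P.obj a ha) (y : P.extObj hR a ha')
    (hxy : HEq x y) : HEq (P.map g ha hb x) (P.extMap hR g ha' hb' y) := by
  obtain rfl : cast (P.extObj_of_lt hR ha' ha) y = x := eq_of_heq ((cast_heq _ _).trans hxy.symm)
  rw [P.extMap_of_lt hR _ _ _ hb, P.extBelow_of_lt hR _ _ _ ha]
  exact (cast_heq _ _).symm

theorem proj_eq_extProj {n : C.Obj} (h : ρ n < k) (h' : ρ n < k + 1) (x : P.obj n h)
    (y : P.extObj hR n h') (hxy : HEq x y) : P.proj n h x = P.extProj hR n h' y := by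
  rw [P.extProj_of_lt hR _ h, eq_of_heq ((cast_heq _ _).trans hxy.symm)]

theorem agree_extPre : P.Agree (P.extPre hR) where
  obj_eq n h h' := (P.extObj_of_lt hR h' h).symm
  map_heq := P.map_heq_extMap hR
  incl_heq n h h' x := by
    rw [show (P.extPre hR).incl n h' x = _ from P.extIncl_of_lt hR h' h x]
    exact (cast_heq _ _).symm
  proj_eq _ := P.proj_eq_extProj hR

theorem fib_extObj (hX : ∀ n, T.Fib (X.obj n)) (n : C.Obj) (h : ρ n < k + 1) :
    T.Fib (P.extObj hR n h) := by
  by_cases h' : ρ n < k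
  · rw [P.extObj_of_lt hR h h']
    exact P.fib_obj n h'
  · rw [P.extObj_of_not_lt hR h h']
    exact MapCocyl.fib (hX n) (EssFib.fib_repl _)

theorem isHEquiv_extIncl (hX : ∀ n, T.Fib (X.obj n)) (n : C.Obj) (h : ρ n < k + 1) :
    IsHEquiv T (P.extIncl hR n h) := by
  by_cases h' : ρ n < k
  · rw [funext (P.extIncl_of_lt hR h h')]
    exact (P.isHEquiv_incl n h').cast_comp _
  · rw [funext (P.extIncl_of_not_lt hR h h')]
    exact (MapCocyl.isHEquiv_incl (hX n) (EssFib.fib_repl _)).cast_comp _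

theorem isFibration_extPre_relMatch (hX : ∀ n, T.Fib (X.obj n)) (n : C.Obj) (h : ρ n < k + 1) :
    IsFibration T ((P.extPre hR).relMatch n h) := by
  by_cases h' : ρ n < k
  · exact (P.agree_extPre hR).isFibration_relMatch n h' h (P.isFibration_relMatch n h')
  -- At a new object the relative matching map is the projection of the mapping cocylinder.
  refine (P.isFibration_newProj hR hX n _).of_comm_sq
    (Equiv.cast (P.extObj_of_not_lt hR h h').symm)
    ((P.agree_extPre hR).relMatchingEquiv n (Nat.le_of_lt_succ h) h.le) fun y => ?_
  refine PreStage.RelMatching.ext (funext fun w => ?_) ?_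
  · change P.extMap hR w.2.1 h _ (cast (P.extObj_of_not_lt hR h h').symm y) = _
    rw [P.extMap_of_lt hR _ _ _ (ρ.redCoslice_lt w (Nat.le_of_lt_succ h)),
      P.extBelow_of_not_lt hR _ _ _ h', cast_cast, cast_eq]
    rfl
  · change P.extProj hR n h (cast (P.extObj_of_not_lt hR h h').symm y) = _
    rw [P.extProj_of_not_lt hR _ h', cast_cast, cast_eq]
    rfl

noncomputable def ext (hX : ∀ n, T.Fib (X.obj n)) : Stage ρ f T (k + 1) where
  toPreStage := P.extPre hR
  fib_obj := P.fib_extObj hR hX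
  isHEquiv_incl := P.isHEquiv_extIncl hR hX
  isFibration_relMatch := P.isFibration_extPre_relMatch hR hX

variable (ρ f) in
noncomputable def seq (hAdm : Admissible T C) (hX : ∀ n, T.Fib (X.obj n))
    (hZ : ∀ n, T.Fib (Z.obj n)) : ∀ k, Stage ρ f T k
  | 0 => zero
  | k + 1 => (seq hAdm hX hZ k).ext
      ((seq hAdm hX hZ k).essFib_relMatching hAdm hZ (seq hAdm hX hZ k).isFibration_relMatch) hX

end Stage

end ReedyFactorisation

theorem exists_reedy_factorisation {T : TLTT} {C : SCat} (ρ : RankFunction C)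
    (hAdm : Admissible T C) {X Z : SFunctor C} (hX : ∀ n, T.Fib (X.obj n))
    (hZ : ∀ n, T.Fib (Z.obj n)) (f : SNat X Z) :
    ∃ (Y : SFunctor C) (i : SNat X Y) (p : SNat Y Z), (∀ n, IsHEquiv T (i.app n)) ∧
      IsReedyFibration T p ∧ ∀ n x, p.app n (i.app n x) = f.app n x :=
  open ReedyFactorisation in
  Stage.exists_factorisation (Stage.seq ρ f hAdm hX hZ) fun _ => Stage.agree_extPre _ _

theorem reedyFibrant_of_isReedyFibration_const {T : TLTT} {C : SCat} {Y : SFunctor C}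
    {p : SNat Y (constF C PUnit)} (hp : IsReedyFibration T p) : ReedyFibrant T Y := fun n =>
  (hp n).of_comm_sq (Equiv.refl _)
    { toFun := fun q => q.1.1
      invFun := fun m => ⟨(m, PUnit.unit), Subtype.ext rfl⟩
      left_inv := fun _ => rfl
      right_inv := fun _ => rfl }
    fun _ => rfl

/-- over an admissible inverse category, every map of
fibrant-type-valued diagrams factors as a levelwise equivalence followed by a
Reedy fibration; in particular every type-valued diagram has a Reedy fibrant
replacement. -/
theorem reedy_fibrant_factorisation (T : TLTT) (C : SCat) (hC : IsInverse C)
    (hAdm : Admissible T C) :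
    (∀ (X Z : SFunctor C), (∀ n, T.Fib (X.obj n)) → (∀ n, T.Fib (Z.obj n)) →
      ∀ f : SNat X Z, ∃ (Y : SFunctor C) (i : SNat X Y) (p : SNat Y Z),
        (∀ n, TwoLevel.IsHEquiv T (i.app n)) ∧ IsReedyFibration T p ∧
        ∀ n a, p.app n (i.app n a) = f.app n a) ∧
    (∀ X : SFunctor C, (∀ n, T.Fib (X.obj n)) →
      ∃ (Y : SFunctor C) (η : SNat X Y), ReedyFibrant T Y ∧
        ∀ n, TwoLevel.IsHEquiv T (η.app n)) := by
  obtain ⟨φ, hφ⟩ := hC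
  let ρ : RankFunction C := ⟨φ, hφ⟩
  refine ⟨fun X Z hX hZ f => exists_reedy_factorisation ρ hAdm hX hZ f, fun X hX => ?_⟩
  obtain ⟨Y, i, p, hi, hp, -⟩ := exists_reedy_factorisation ρ hAdm hX (fun _ => T.fibUnit)
    (⟨fun _ _ => PUnit.unit, fun _ _ => rfl⟩ : SNat X (constF C PUnit))
  exact ⟨Y, i, reedyFibrant_of_isReedyFibration_const hp, hi⟩
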